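/- arXiv:1304.7750 — 2 statements merged into one kernel-verified Lean document; each statement's English description precedes it below -/
import Mathlib

section
/- Let (a,b,c) be a triple of positive real numbers with a < b < c and b − a < c₀ < a, where c₀ := c − ⌊c/b⌋·b. Then D_{a,b,c} = (S_{a,b,c} ∩ ([0, c₀+a−b) + aℤ) ∩ (S_{a,b,c} − ⌊c/b⌋b)) ∪ (S_{a,b,c} ∩ ⋃_{λ} (S_{a,b,c} − λ)), where the union is over all λ ∈ bℤ with b ≤ λ ≤ (⌊c/b⌋ − 1)b, and S − r := {s − r : s ∈ S}. -/
open MeasureTheory Set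

/- Indicator function of the interval `[0, c)`. -/
open Classical in
noncomputable def chiIco (c x : ℝ) : ℝ := if 0 ≤ x ∧ x < c then 1 else 0

/-- The row `μ = j·a` of the infinite matrix `M_{a,b,c}(t)` applied to the vector
`z : bℤ → ℝ` (indexed by `k : ℤ`, with `λ = k·b`):
`(M_{a,b,c}(t)z)(μ) = Σ_{λ∈bℤ} χ_{[0,c)}(t − μ + λ)·z(λ)`. -/
noncomputable def Mrow (a b c t : ℝ) (z : ℤ → ℝ) (j : ℤ) : ℝ :=
  ∑' k : ℤ, chiIco c (t - (j : ℝ) * a + (k : ℝ) * b) * z k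

/-- `D_{a,b,c} = {t : M_{a,b,c}(t)x = 2 for some binary x with x(0) = 1}`. -/
def Dset (a b c : ℝ) : Set ℝ :=
  {t : ℝ | ∃ x : ℤ → ℝ, (∀ k, x k = 0 ∨ x k = 1) ∧ x 0 = 1 ∧ ∀ j : ℤ, Mrow a b c t x j = 2}

/-- `S_{a,b,c} = {t : M_{a,b,c}(t)x = 1 for some binary x with x(0) = 1}`. -/
def Sset (a b c : ℝ) : Set ℝ :=
  {t : ℝ | ∃ x : ℤ → ℝ, (∀ k, x k = 0 ∨ x k = 1) ∧ x 0 = 1 ∧ ∀ j : ℤ, Mrow a b c t x j = 1}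

/-- The periodic set `X + aℤ = {x + ka : x ∈ X, k ∈ ℤ}`. -/
def perSet (a : ℝ) (X : Set ℝ) : Set ℝ := {t : ℝ | ∃ k : ℤ, t - (k : ℝ) * a ∈ X}

/-!
Identify a binary vector `x` with the set `Λ ⊆ ℤ` of its ones: `M_{a,b,c}(t)x = n` says that every
window `[ja - t, ja - t + c)` contains `kb` for exactly `n` points `k ∈ Λ`. Write `c = qb + c₀`.
In a single cover (`n = 1`) consecutive points are `q` or `q + 1` apart, and `p + q` follows `p`
exactly when no window contains both; as this does not depend on the cover (and likewise for
predecessors), two single covers with a common point coincide.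

A double cover through `0` splits by the parity of a counting function into two single covers:
one through `0`, and one through the partner `m ∈ [1, q]` of `0` in the window starting in
`(-a, 0]`. If `m = q`, the even cover has no point in `(0, q + 1)`, so no window starts in
`(0, b - c₀]`, which puts `t` in `[0, c₀ + a - b) + aℤ`. Conversely, single covers through `0` and
through `m` are disjoint: by rigidity they would otherwise coincide, forcing `m = q`, and then
`t ∈ [0, c₀ + a - b) + aℤ` yields a window containing both `0` and `q`. Their union is a double
cover.
-/

section Covers

variable {a b c t : ℝ}

def window (b c s : ℝ) : Set ℤ := {k | s ≤ k * b ∧ k * b < s + c}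

theorem mem_window {s : ℝ} {k : ℤ} : k ∈ window b c s ↔ s ≤ k * b ∧ k * b < s + c := Iff.rfl

theorem window_finite (hb : 0 < b) (c s : ℝ) : (window b c s).Finite :=
  (finite_Icc ⌈s / b⌉ ⌊(s + c) / b⌋).subset fun _ hk =>
    ⟨Int.ceil_le.2 ((div_le_iff₀ hb).2 hk.1), Int.le_floor.2 ((le_div_iff₀ hb).2 hk.2.le)⟩

theorem window_ordConnected (hb : 0 < b) (c s : ℝ) : (window b c s).OrdConnected :=
  ⟨fun _ hk₁ _ hk₂ _ hk =>
    ⟨hk₁.1.trans (mul_le_mul_of_nonneg_right (by exact_mod_cast hk.1) hb.le),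
      (mul_le_mul_of_nonneg_right (by exact_mod_cast hk.2) hb.le).trans_lt hk₂.2⟩⟩

/-- `M_{a,b,c}(t)` applied to the indicator of `Λ` is `n`: row `μ = ja` counts the points of `Λ`
in the window starting at `ja - t` (`Mrow_indicator_one`). -/
def IsCover (a b c t : ℝ) (n : ℕ) (Λ : Set ℤ) : Prop :=
  ∀ j : ℤ, (Λ ∩ window b c (j * a - t)).ncard = n

theorem Mrow_indicator_one (Λ : Set ℤ) (j : ℤ) :
    Mrow a b c t (Λ.indicator 1) j = (Λ ∩ window b c (j * a - t)).ncard := by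
  have hterm : ∀ k : ℤ, chiIco c (t - j * a + k * b) * Λ.indicator 1 k =
      (Λ ∩ window b c (j * a - t)).indicator 1 k := by
    intro k
    have hw : (0 ≤ t - j * a + k * b ∧ t - j * a + k * b < c) ↔ k ∈ window b c (j * a - t) := by
      rw [mem_window]
      constructor <;> rintro ⟨h₁, h₂⟩ <;> constructor <;> linarith
    by_cases hk : k ∈ Λ <;> by_cases hkw : k ∈ window b c (j * a - t) <;> simp [chiIco, hw, hk, hkw]
  rw [Mrow, tsum_congr hterm, ← tsum_subtype, Pi.one_def, tsum_const, nsmul_one,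
    Nat.card_coe_set_eq]

theorem exists_binary_iff (n : ℕ) :
    (∃ x : ℤ → ℝ, (∀ k, x k = 0 ∨ x k = 1) ∧ x 0 = 1 ∧ ∀ j : ℤ, Mrow a b c t x j = n) ↔
      ∃ Λ : Set ℤ, 0 ∈ Λ ∧ IsCover a b c t n Λ := by
  constructor
  · rintro ⟨x, hx, hx0, hxn⟩
    have hxΛ : x = {k | x k = 1}.indicator 1 :=
      funext fun k => by rcases hx k with h | h <;> simp [h]
    refine ⟨{k | x k = 1}, hx0, fun j => ?_⟩
    have := hxn j
    rw [hxΛ, Mrow_indicator_one] at this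
    exact_mod_cast this
  · rintro ⟨Λ, h0, hΛ⟩
    refine ⟨Λ.indicator 1, fun k => ?_, by simp [h0], fun j => by rw [Mrow_indicator_one, hΛ j]⟩
    by_cases hk : k ∈ Λ <;> simp [hk]

theorem mem_Sset_iff : t ∈ Sset a b c ↔ ∃ Λ : Set ℤ, 0 ∈ Λ ∧ IsCover a b c t 1 Λ := by
  rw [Sset, mem_ofPred_eq]
  exact_mod_cast exists_binary_iff 1

theorem mem_Dset_iff : t ∈ Dset a b c ↔ ∃ Λ : Set ℤ, 0 ∈ Λ ∧ IsCover a b c t 2 Λ := by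
  rw [Dset, mem_ofPred_eq]
  exact_mod_cast exists_binary_iff 2

theorem IsCover.preimage_add {n : ℕ} {Λ : Set ℤ} (h : IsCover a b c t n Λ) (m : ℤ) :
    IsCover a b c (t + m * b) n ((· + m) ⁻¹' Λ) := by
  intro j
  have hshift : (· + m) ⁻¹' Λ ∩ window b c (j * a - (t + m * b)) =
      (· + m) ⁻¹' (Λ ∩ window b c (j * a - t)) := by
    ext k
    simp only [mem_inter_iff, mem_preimage, mem_window, Int.cast_add]
    constructor <;> rintro ⟨hk, h₁, h₂⟩ <;> exact ⟨hk, by linarith, by linarith⟩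
  rw [hshift, ncard_preimage_of_injective_subset_range (add_left_injective m)
    fun k _ => ⟨k - m, sub_add_cancel k m⟩, h j]

theorem IsCover.union (hb : 0 < b) {n₁ n₂ : ℕ} {Λ₁ Λ₂ : Set ℤ} (h₁ : IsCover a b c t n₁ Λ₁)
    (h₂ : IsCover a b c t n₂ Λ₂) (hd : Disjoint Λ₁ Λ₂) :
    IsCover a b c t (n₁ + n₂) (Λ₁ ∪ Λ₂) := by
  intro j
  rw [union_inter_distrib_right, ncard_union_eq (hd.mono inter_subset_left inter_subset_left)
    ((window_finite hb c _).inter_of_right _) ((window_finite hb c _).inter_of_right _), h₁ j, h₂ j]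

end Covers

theorem exists_grid_mem_Ioc {a : ℝ} (ha : 0 < a) (t α : ℝ) : ∃ j : ℤ, j * a - t ∈ Ioc α (α + a) := by
  obtain ⟨j, hj, -⟩ := existsUnique_add_zsmul_mem_Ioc ha (-t) α
  exact ⟨j, by rwa [zsmul_eq_mul, neg_add_eq_sub] at hj⟩

def SharedWindow (a b c t : ℝ) (k₁ k₂ : ℤ) : Prop :=
  ∃ j : ℤ, k₁ ∈ window b c (j * a - t) ∧ k₂ ∈ window b c (j * a - t)

namespace IsCover

variable {a b c c₀ t : ℝ} {q : ℤ} {Λ Λ' : Set ℤ}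

theorem exists_mem_window (h : IsCover a b c t 1 Λ) (j : ℤ) :
    ∃ k ∈ Λ, k ∈ window b c (j * a - t) :=
  nonempty_of_ncard_ne_zero (h j ▸ one_ne_zero)

theorem not_sharedWindow (h : IsCover a b c t 1 Λ) {k₁ k₂ : ℤ} (hk₁ : k₁ ∈ Λ) (hk₂ : k₂ ∈ Λ)
    (hne : k₁ ≠ k₂) : ¬SharedWindow a b c t k₁ k₂ := by
  rintro ⟨j, hw₁, hw₂⟩
  obtain ⟨k, hk⟩ := ncard_eq_one.1 (h j)
  have h₁ : k₁ ∈ Λ ∩ window b c (j * a - t) := ⟨hk₁, hw₁⟩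
  have h₂ : k₂ ∈ Λ ∩ window b c (j * a - t) := ⟨hk₂, hw₂⟩
  rw [hk] at h₁ h₂
  exact hne (h₁.trans h₂.symm)

theorem grid_not_mem_Ioc_of_gap (h : IsCover a b c t 1 Λ) (hb : 0 < b) {r₁ r₂ : ℤ}
    (hgap : ∀ k ∈ Λ, k ≤ r₁ ∨ r₂ ≤ k) (j : ℤ) : j * a - t ∉ Ioc (r₁ * b) (r₂ * b - c) := by
  rintro ⟨hj₁, hj₂⟩
  obtain ⟨k, hk, hk₁, hk₂⟩ := h.exists_mem_window j
  rcases hgap k hk with hkr | hkr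
  · have : (k : ℝ) * b ≤ r₁ * b := mul_le_mul_of_nonneg_right (by exact_mod_cast hkr) hb.le
    linarith
  · have : (r₂ : ℝ) * b ≤ k * b := mul_le_mul_of_nonneg_right (by exact_mod_cast hkr) hb.le
    linarith

theorem add_le_of_lt (ha : 0 < a) (hab : a < b) (hc : c = q * b + c₀) (h₁ : b - a < c₀)
    (h : IsCover a b c t 1 Λ) {k₁ k₂ : ℤ} (hk₁ : k₁ ∈ Λ) (hk₂ : k₂ ∈ Λ) (hlt : k₁ < k₂) :
    k₁ + q ≤ k₂ := by
  by_contra! hgt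
  have hb := ha.trans hab
  have hdist : ((k₂ - k₁ : ℤ) : ℝ) * b ≤ ((q - 1 : ℤ) : ℝ) * b :=
    mul_le_mul_of_nonneg_right (by exact_mod_cast (by omega : k₂ - k₁ ≤ q - 1)) hb.le
  have hlt' : (k₁ : ℝ) * b < k₂ * b := mul_lt_mul_of_pos_right (by exact_mod_cast hlt) hb
  push_cast [sub_mul, one_mul] at hdist
  obtain ⟨j, hj₁, hj₂⟩ := exists_grid_mem_Ioc ha t (k₂ * b - c)
  exact h.not_sharedWindow hk₁ hk₂ hlt.ne
    ⟨j, ⟨by linarith, by linarith⟩, by linarith, by linarith⟩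

theorem add_mem_or_add_one_mem (ha : 0 < a) (hab : a < b) (hc : c = q * b + c₀)
    (h₁ : b - a < c₀) (h₂ : c₀ < a) (h : IsCover a b c t 1 Λ) {p : ℤ} (hp : p ∈ Λ) :
    p + q ∈ Λ ∨ p + q + 1 ∈ Λ := by
  have hb := ha.trans hab
  obtain ⟨j, hj₁, hj₂⟩ := exists_grid_mem_Ioc ha t (p * b)
  obtain ⟨k, hk, hk₁, hk₂⟩ := h.exists_mem_window j
  have hpk : p < k := by exact_mod_cast lt_of_mul_lt_mul_right (hj₁.trans_le hk₁) hb.le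
  have hkq : k < p + q + 2 := by
    have : (k : ℝ) * b < (p + q + 2) * b := by linarith
    exact_mod_cast lt_of_mul_lt_mul_right this hb.le
  have := h.add_le_of_lt ha hab hc h₁ hp hk hpk
  obtain rfl | rfl : k = p + q ∨ k = p + q + 1 := by omega
  exacts [Or.inl hk, Or.inr hk]

theorem sub_mem_or_sub_one_mem (ha : 0 < a) (hab : a < b) (hc : c = q * b + c₀)
    (h₁ : b - a < c₀) (h₂ : c₀ < a) (h : IsCover a b c t 1 Λ) {p : ℤ} (hp : p ∈ Λ) :
    p - q ∈ Λ ∨ p - q - 1 ∈ Λ := by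
  have hb := ha.trans hab
  obtain ⟨j, hj₁, hj₂⟩ := exists_grid_mem_Ioc ha t (p * b - c - a)
  obtain ⟨k, hk, hk₁, hk₂⟩ := h.exists_mem_window j
  have hkp : k < p := by exact_mod_cast lt_of_mul_lt_mul_right (by linarith : (k : ℝ) * b < p * b) hb.le
  have hkq : p - q - 2 < k := by
    have : ((p : ℝ) - q - 2) * b < k * b := by linarith
    exact_mod_cast lt_of_mul_lt_mul_right this hb.le
  have := h.add_le_of_lt ha hab hc h₁ hk hp hkp
  obtain rfl | rfl : k = p - q ∨ k = p - q - 1 := by omega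
  exacts [Or.inl hk, Or.inr hk]


theorem add_mem_iff (ha : 0 < a) (hab : a < b) (hc : c = q * b + c₀) (h₁ : b - a < c₀)
    (hq : 0 < q) (h : IsCover a b c t 1 Λ) {p : ℤ} (hp : p ∈ Λ) :
    p + q ∈ Λ ↔ ¬SharedWindow a b c t p (p + q) := by
  refine ⟨fun hpq => h.not_sharedWindow hp hpq (by omega), fun hns => ?_⟩
  by_contra hpq
  have hb := ha.trans hab
  have hqb : 0 < (q : ℝ) * b := mul_pos (by exact_mod_cast hq) hb
  have hgap : ∀ k ∈ Λ, k ≤ p ∨ p + q + 1 ≤ k := fun k hk => by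
    refine (le_or_gt k p).imp id fun hpk => ?_
    obtain hk' | hk' := (h.add_le_of_lt ha hab hc h₁ hp hk hpk).eq_or_lt
    exacts [absurd (hk' ▸ hk) hpq, hk']
  obtain ⟨j, hj₁, hj₂⟩ := exists_grid_mem_Ioc ha t ((p + q) * b - c)
  rcases le_or_gt (j * a - t) (p * b) with hj | hj
  · exact hns ⟨j, ⟨hj, by linarith⟩, by rw [mem_window]; push_cast; constructor <;> linarith⟩
  · exact h.grid_not_mem_Ioc_of_gap hb hgap j ⟨hj, by push_cast; linarith⟩

theorem sub_mem_iff (ha : 0 < a) (hab : a < b) (hc : c = q * b + c₀) (h₁ : b - a < c₀)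
    (hq : 0 < q) (h : IsCover a b c t 1 Λ) {p : ℤ} (hp : p ∈ Λ) :
    p - q ∈ Λ ↔ ¬SharedWindow a b c t (p - q) p := by
  refine ⟨fun hpq => h.not_sharedWindow hpq hp (by omega), fun hns => ?_⟩
  by_contra hpq
  have hb := ha.trans hab
  have hqb : 0 < (q : ℝ) * b := mul_pos (by exact_mod_cast hq) hb
  have hgap : ∀ k ∈ Λ, k ≤ p - q - 1 ∨ p ≤ k := fun k hk => by
    refine (lt_or_ge k p).imp (fun hkp => ?_) id
    obtain hk' | hk' := (h.add_le_of_lt ha hab hc h₁ hk hp hkp).eq_or_lt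
    · exact absurd (by rwa [← hk', add_sub_cancel_right]) hpq
    · omega
  obtain ⟨j, hj₁, hj₂⟩ := exists_grid_mem_Ioc ha t ((p - q - 1) * b)
  rcases le_or_gt (j * a - t) (p * b - c) with hj | hj
  · exact h.grid_not_mem_Ioc_of_gap hb hgap j ⟨by push_cast; linarith, hj⟩
  · exact hns ⟨j, by rw [mem_window]; push_cast; constructor <;> linarith, by linarith, by linarith⟩

theorem exists_succ_mem (ha : 0 < a) (hab : a < b) (hc : c = q * b + c₀) (h₁ : b - a < c₀)
    (h₂ : c₀ < a) (hq : 0 < q) (h : IsCover a b c t 1 Λ) (h' : IsCover a b c t 1 Λ') {p : ℤ}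
    (hp : p ∈ Λ) (hp' : p ∈ Λ') : ∃ n, p < n ∧ n ∈ Λ ∧ n ∈ Λ' ∧ ∀ k ∈ Λ, p < k → n ≤ k := by
  have hiff : p + q ∈ Λ ↔ p + q ∈ Λ' :=
    (h.add_mem_iff ha hab hc h₁ hq hp).trans (h'.add_mem_iff ha hab hc h₁ hq hp').symm
  by_cases hpq : p + q ∈ Λ
  · exact ⟨p + q, by omega, hpq, hiff.1 hpq, fun k hk hpk => h.add_le_of_lt ha hab hc h₁ hp hk hpk⟩
  refine ⟨p + q + 1, by omega, (h.add_mem_or_add_one_mem ha hab hc h₁ h₂ hp).resolve_left hpq,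
    (h'.add_mem_or_add_one_mem ha hab hc h₁ h₂ hp').resolve_left (hiff.not.1 hpq),
    fun k hk hpk => ?_⟩
  obtain hk' | hk' := (h.add_le_of_lt ha hab hc h₁ hp hk hpk).eq_or_lt
  exacts [absurd (hk' ▸ hk) hpq, hk']

theorem exists_pred_mem (ha : 0 < a) (hab : a < b) (hc : c = q * b + c₀) (h₁ : b - a < c₀)
    (h₂ : c₀ < a) (hq : 0 < q) (h : IsCover a b c t 1 Λ) (h' : IsCover a b c t 1 Λ') {p : ℤ}
    (hp : p ∈ Λ) (hp' : p ∈ Λ') : ∃ n, n < p ∧ n ∈ Λ ∧ n ∈ Λ' ∧ ∀ k ∈ Λ, k < p → k ≤ n := by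
  have hiff : p - q ∈ Λ ↔ p - q ∈ Λ' :=
    (h.sub_mem_iff ha hab hc h₁ hq hp).trans (h'.sub_mem_iff ha hab hc h₁ hq hp').symm
  by_cases hpq : p - q ∈ Λ
  · refine ⟨p - q, by omega, hpq, hiff.1 hpq, fun k hk hkp => ?_⟩
    have := h.add_le_of_lt ha hab hc h₁ hk hp hkp
    omega
  refine ⟨p - q - 1, by omega, (h.sub_mem_or_sub_one_mem ha hab hc h₁ h₂ hp).resolve_left hpq,
    (h'.sub_mem_or_sub_one_mem ha hab hc h₁ h₂ hp').resolve_left (hiff.not.1 hpq),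
    fun k hk hkp => ?_⟩
  obtain hk' | hk' := (h.add_le_of_lt ha hab hc h₁ hk hp hkp).eq_or_lt
  · exact absurd (by rwa [← hk', add_sub_cancel_right]) hpq
  · omega

theorem mem_of_mem_of_mem (ha : 0 < a) (hab : a < b) (hc : c = q * b + c₀) (h₁ : b - a < c₀)
    (h₂ : c₀ < a) (hq : 0 < q) (h : IsCover a b c t 1 Λ) (h' : IsCover a b c t 1 Λ') {p r : ℤ}
    (hp : p ∈ Λ) (hp' : p ∈ Λ') (hr : r ∈ Λ) : r ∈ Λ' := by
  rcases le_total p r with hpr | hrp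
  · obtain ⟨m, ⟨hm, hm', hmr⟩, hmax⟩ := Int.exists_greatest_of_bdd
      (P := fun k => k ∈ Λ ∧ k ∈ Λ' ∧ k ≤ r) ⟨r, fun _ hk => hk.2.2⟩ ⟨p, hp, hp', hpr⟩
    obtain rfl | hmr := hmr.eq_or_lt
    · exact hm'
    obtain ⟨n, hmn, hn, hn', hmin⟩ := h.exists_succ_mem ha hab hc h₁ h₂ hq h' hm hm'
    have := hmax n ⟨hn, hn', hmin r hr hmr⟩
    omega
  · obtain ⟨m, ⟨hm, hm', hrm⟩, hmin⟩ := Int.exists_least_of_bdd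
      (P := fun k => k ∈ Λ ∧ k ∈ Λ' ∧ r ≤ k) ⟨r, fun _ hk => hk.2.2⟩ ⟨p, hp, hp', hrp⟩
    obtain rfl | hrm := hrm.eq_or_lt
    · exact hm'
    obtain ⟨n, hnm, hn, hn', hmax⟩ := h.exists_pred_mem ha hab hc h₁ h₂ hq h' hm hm'
    have := hmin n ⟨hn, hn', hmax r hr hrm⟩
    omega

end IsCover

noncomputable def signedCount (Λ : Set ℤ) (k : ℤ) : ℤ :=
  (Λ ∩ Ico 0 k).ncard - (Λ ∩ Ico k 0).ncard

theorem ncard_inter_Ico_add_ncard_inter_Ico (Λ : Set ℤ) {k₁ k₂ k₃ : ℤ} (h₁ : k₁ ≤ k₂)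
    (h₂ : k₂ ≤ k₃) :
    (Λ ∩ Ico k₁ k₂).ncard + (Λ ∩ Ico k₂ k₃).ncard = (Λ ∩ Ico k₁ k₃).ncard := by
  rw [← Ico_union_Ico_eq_Ico h₁ h₂, inter_union_distrib_left, ncard_union_eq
    (Ico_disjoint_Ico_same.mono inter_subset_right inter_subset_right)
    ((finite_Ico _ _).inter_of_right _) ((finite_Ico _ _).inter_of_right _)]

theorem signedCount_sub_signedCount (Λ : Set ℤ) {k₁ k₂ : ℤ} (h : k₁ ≤ k₂) :
    signedCount Λ k₂ - signedCount Λ k₁ = (Λ ∩ Ico k₁ k₂).ncard := by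
  have hempty : ∀ {x y : ℤ}, y ≤ x → (Λ ∩ Ico x y).ncard = 0 := fun hxy => by
    rw [Ico_eq_empty (not_lt.2 hxy), inter_empty, ncard_empty]
  unfold signedCount
  rcases le_total 0 k₁ with h₀ | h₀
  · have := ncard_inter_Ico_add_ncard_inter_Ico Λ h₀ h
    rw [hempty h₀, hempty (h₀.trans h)]
    omega
  rcases le_total 0 k₂ with h₀' | h₀'
  · have := ncard_inter_Ico_add_ncard_inter_Ico Λ h₀ h₀'
    rw [hempty h₀, hempty h₀']
    omega
  · have := ncard_inter_Ico_add_ncard_inter_Ico Λ h h₀'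
    rw [hempty h₀, hempty h₀']
    omega

namespace IsCover

variable {a b c c₀ t : ℝ} {q : ℤ} {Λ : Set ℤ}

theorem exists_pair (hb : 0 < b) (h : IsCover a b c t 2 Λ) (j : ℤ) :
    ∃ k₁ k₂, k₁ < k₂ ∧ Λ ∩ window b c (j * a - t) = {k₁, k₂} ∧
      signedCount Λ k₂ = signedCount Λ k₁ + 1 := by
  obtain ⟨k₁, k₂, hne, hW⟩ := ncard_eq_two.1 (h j)
  wlog hlt : k₁ < k₂ generalizing k₁ k₂
  · exact this k₂ k₁ hne.symm (by rw [hW, pair_comm]) (hne.lt_or_gt.resolve_left hlt)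
  have hk₁ : k₁ ∈ Λ ∩ window b c (j * a - t) := hW ▸ mem_insert _ _
  have hk₂ : k₂ ∈ Λ ∩ window b c (j * a - t) := hW ▸ mem_insert_of_mem _ rfl
  have hconsec : Λ ∩ Ico k₁ k₂ = {k₁} := by
    refine eq_singleton_iff_unique_mem.2 ⟨⟨hk₁.1, le_rfl, hlt⟩, fun k ⟨hk, hk₁k, hkk₂⟩ => ?_⟩
    have hkW : k ∈ Λ ∩ window b c (j * a - t) :=
      ⟨hk, (window_ordConnected hb c _).out hk₁.2 hk₂.2 ⟨hk₁k, hkk₂.le⟩⟩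
    rw [hW] at hkW
    exact hkW.resolve_right hkk₂.ne
  refine ⟨k₁, k₂, hlt, hW, ?_⟩
  have := signedCount_sub_signedCount Λ hlt.le
  rw [hconsec, ncard_singleton] at this
  omega

theorem isCover_sep_signedCount (hb : 0 < b) (h : IsCover a b c t 2 Λ) {P : ℤ → Prop}
    (hP : ∀ n, P (n + 1) ↔ ¬P n) : IsCover a b c t 1 {k ∈ Λ | P (signedCount Λ k)} := by
  intro j
  obtain ⟨k₁, k₂, hlt, hW, hcount⟩ := h.exists_pair hb j
  have hsep : {k ∈ Λ | P (signedCount Λ k)} ∩ window b c (j * a - t) =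
      {k ∈ ({k₁, k₂} : Set ℤ) | P (signedCount Λ k)} := by
    rw [← hW]
    ext k
    simp only [mem_inter_iff, mem_ofPred_eq]
    tauto
  rw [hsep, ncard_eq_one]
  by_cases hk₁ : P (signedCount Λ k₁)
  · refine ⟨k₁, eq_singleton_iff_unique_mem.2 ⟨⟨mem_insert _ _, hk₁⟩, ?_⟩⟩
    rintro k ⟨rfl | rfl, hk⟩
    exacts [rfl, absurd hk₁ ((hP _).1 (hcount ▸ hk))]
  · refine ⟨k₂, eq_singleton_iff_unique_mem.2 ⟨⟨mem_insert_of_mem _ rfl, ?_⟩, ?_⟩⟩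
    · rw [hcount, hP]
      exact hk₁
    · rintro k ⟨rfl | rfl, hk⟩
      exacts [absurd hk hk₁, rfl]

end IsCover

section Partition

variable {a b c c₀ t : ℝ} {q : ℤ}

theorem IsCover.exists_partner (ha : 0 < a) (hab : a < b) (hc : c = q * b + c₀)
    (h₁ : b - a < c₀) (h₂ : c₀ < a) (hq : 0 < q) {Λ : Set ℤ} (h : IsCover a b c t 2 Λ)
    (h0 : 0 ∈ Λ) : ∃ m, 0 < m ∧ m ≤ q ∧ m ∈ Λ ∧ signedCount Λ m = 1 := by
  have hb := ha.trans hab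
  have hqb : b ≤ (q : ℝ) * b := le_mul_of_one_le_left hb.le (by exact_mod_cast hq)
  obtain ⟨j, hj₁, hj₂⟩ := exists_grid_mem_Ioc ha t (-a)
  obtain ⟨k₁, k₂, hlt, hW, hcount⟩ := h.exists_pair hb j
  have hk₁ : k₁ ∈ Λ ∩ window b c (j * a - t) := hW ▸ mem_insert _ _
  have hk₂ : k₂ ∈ Λ ∩ window b c (j * a - t) := hW ▸ mem_insert_of_mem _ rfl
  have h0W : (0 : ℤ) ∈ Λ ∩ window b c (j * a - t) :=
    ⟨h0, by rw [mem_window, Int.cast_zero, zero_mul]; constructor <;> linarith⟩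
  have hk₁0 : 0 ≤ k₁ := by
    have : (-1 : ℝ) * b < k₁ * b := by linarith [hk₁.2.1]
    have : (-1 : ℤ) < k₁ := by exact_mod_cast lt_of_mul_lt_mul_right this hb.le
    omega
  obtain rfl : k₁ = 0 := by
    rw [hW, mem_insert_iff, mem_singleton_iff] at h0W
    omega
  refine ⟨k₂, hlt, ?_, hk₂.1, by simpa [signedCount] using hcount⟩
  have : (k₂ : ℝ) * b < (q + 1) * b := by linarith [hk₂.2.2]
  have : k₂ < q + 1 := by exact_mod_cast lt_of_mul_lt_mul_right this hb.le
  omega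

theorem IsCover.mem_perSet (ha : 0 < a) (hab : a < b) (hc : c = q * b + c₀) (h₁ : b - a < c₀)
    {Λ : Set ℤ} (h : IsCover a b c t 1 Λ) (h0 : 0 ∈ Λ) (hq : q ∉ Λ) :
    t ∈ perSet a (Ico 0 (c₀ + a - b)) := by
  have hgap : ∀ k ∈ Λ, k ≤ 0 ∨ q + 1 ≤ k := fun k hk => by
    refine (le_or_gt k 0).imp id fun hk0 => ?_
    obtain hk' | hk' := (h.add_le_of_lt ha hab hc h₁ h0 hk hk0).eq_or_lt
    · rw [zero_add] at hk'
      exact absurd (hk' ▸ hk) hq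
    · omega
  obtain ⟨j, hj₁, hj₂⟩ := exists_grid_mem_Ioc ha t 0
  have hj : (q + 1) * b - c < j * a - t := by
    by_contra! hj
    exact h.grid_not_mem_Ioc_of_gap (ha.trans hab) hgap j ⟨by simpa using hj₁, by push_cast; linarith⟩
  refine ⟨j - 1, ?_, ?_⟩ <;> push_cast <;> linarith

theorem sharedWindow_of_mem_perSet (ha : 0 < a) (hab : a < b) (hc : c = q * b + c₀) (hq : 0 < q)
    (ht : t ∈ perSet a (Ico 0 (c₀ + a - b))) : SharedWindow a b c t 0 q := by
  obtain ⟨j, hj₁, hj₂⟩ := ht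
  have hqb : 0 ≤ (q : ℝ) * b := mul_nonneg (by exact_mod_cast hq.le) (ha.trans hab).le
  refine ⟨j, ?_, ?_⟩ <;> rw [mem_window] <;> push_cast <;> constructor <;> linarith

theorem exists_of_mem_Dset (ha : 0 < a) (hab : a < b) (hc : c = q * b + c₀) (h₁ : b - a < c₀)
    (h₂ : c₀ < a) (hq : 0 < q) (ht : t ∈ Dset a b c) :
    ∃ m, 0 < m ∧ m ≤ q ∧ t ∈ Sset a b c ∧ t + m * b ∈ Sset a b c ∧
      (m = q → t ∈ perSet a (Ico 0 (c₀ + a - b))) := by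
  have hb := ha.trans hab
  obtain ⟨Λ, h0, h⟩ := mem_Dset_iff.1 ht
  obtain ⟨m, hm, hmq, hmΛ, hcount⟩ := h.exists_partner ha hab hc h₁ h₂ hq h0
  have hEven := h.isCover_sep_signedCount hb (P := Even) fun _ => Int.even_add_one
  have hOdd := h.isCover_sep_signedCount hb (P := Odd) fun _ => by
    rw [odd_add_one, Int.not_odd_iff_even]
  have h0Even : 0 ∈ {k ∈ Λ | Even (signedCount Λ k)} := ⟨h0, by simp [signedCount]⟩
  have hmOdd : 0 ∈ (· + m) ⁻¹' {k ∈ Λ | Odd (signedCount Λ k)} := by simp [hmΛ, hcount]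
  refine ⟨m, hm, hmq, mem_Sset_iff.2 ⟨_, h0Even, hEven⟩,
    mem_Sset_iff.2 ⟨_, hmOdd, hOdd.preimage_add m⟩,
    fun hmq' => hEven.mem_perSet ha hab hc h₁ h0Even fun hqEven => ?_⟩
  rw [← hmq', mem_sep_iff, hcount] at hqEven
  exact Int.not_even_one hqEven.2

theorem mem_Dset_of_mem_Sset (ha : 0 < a) (hab : a < b) (hc : c = q * b + c₀)
    (h₁ : b - a < c₀) (h₂ : c₀ < a) {m : ℤ} (hm : 0 < m) (hmq : m ≤ q) (hS : t ∈ Sset a b c)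
    (hSm : t + m * b ∈ Sset a b c) (hper : m = q → t ∈ perSet a (Ico 0 (c₀ + a - b))) :
    t ∈ Dset a b c := by
  have hq : 0 < q := hm.trans_le hmq
  obtain ⟨Λ₁, h0₁, hΛ₁⟩ := mem_Sset_iff.1 hS
  obtain ⟨Λ, h0, hΛ⟩ := mem_Sset_iff.1 hSm
  have hΛ₂ : IsCover a b c t 1 ((· + -m) ⁻¹' Λ) := by
    simpa using hΛ.preimage_add (-m)
  have hm₂ : m ∈ (· + -m) ⁻¹' Λ := by simpa using h0
  have hdisj : Disjoint Λ₁ ((· + -m) ⁻¹' Λ) := by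
    refine disjoint_left.2 fun p hp₁ hp₂ => ?_
    have h0₂ := hΛ₁.mem_of_mem_of_mem ha hab hc h₁ h₂ hq hΛ₂ hp₁ hp₂ h0₁
    obtain rfl : m = q := le_antisymm hmq (by simpa using hΛ₂.add_le_of_lt ha hab hc h₁ h0₂ hm₂ hm)
    exact hΛ₂.not_sharedWindow h0₂ hm₂ hm.ne (sharedWindow_of_mem_perSet ha hab hc hq (hper rfl))
  exact mem_Dset_iff.2 ⟨_, Or.inl h0₁, hΛ₁.union (ha.trans hab) hΛ₂ hdisj⟩

end Partition

/-- Theorem `dabcsabc`: with `c₀ = c − ⌊c/b⌋·b` and `b − a < c₀ < a`,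
`D_{a,b,c} = (S_{a,b,c} ∩ ([0, c₀+a−b) + aℤ) ∩ (S_{a,b,c} − ⌊c/b⌋b))
∪ (S_{a,b,c} ∩ ⋃_{λ∈bℤ, b ≤ λ ≤ (⌊c/b⌋−1)b} (S_{a,b,c} − λ))`. -/
theorem D_from_S_set_operations (a b c c₀ : ℝ)
    (ha : 0 < a) (hab : a < b) (hbc : b < c)
    (hc0 : c₀ = c - (⌊c / b⌋ : ℝ) * b) (h1 : b - a < c₀) (h2 : c₀ < a) :
    Dset a b c =
      (Sset a b c ∩ perSet a (Set.Ico 0 (c₀ + a - b)) ∩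
        ((fun s => s - (⌊c / b⌋ : ℝ) * b) '' Sset a b c)) ∪
      (Sset a b c ∩
        ⋃ (k : ℤ) (_ : 1 ≤ k ∧ k ≤ ⌊c / b⌋ - 1),
          (fun s => s - (k : ℝ) * b) '' Sset a b c) := by
  have hq : 0 < ⌊c / b⌋ := Int.floor_pos.2 ((one_le_div (ha.trans hab)).2 hbc.le)
  have hc : c = ⌊c / b⌋ * b + c₀ := by rw [hc0]; ring
  ext t
  simp only [mem_union, mem_inter_iff, mem_iUnion, mem_image, exists_prop]
  constructor
  · intro ht
    obtain ⟨m, hm, hmq, hS, hSm, hper⟩ := exists_of_mem_Dset ha hab hc h1 h2 hq ht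
    obtain hmq | rfl := hmq.lt_or_eq
    · exact Or.inr ⟨hS, m, ⟨hm, by omega⟩, _, hSm, add_sub_cancel_right t _⟩
    · exact Or.inl ⟨⟨hS, hper rfl⟩, _, hSm, add_sub_cancel_right t _⟩
  · rintro (⟨⟨hS, hper⟩, s, hs, rfl⟩ | ⟨hS, m, ⟨hm, hmq⟩, s, hs, rfl⟩)
    · exact mem_Dset_of_mem_Sset ha hab hc h1 h2 hq le_rfl hS (by rwa [sub_add_cancel])
        fun _ => hper
    · exact mem_Dset_of_mem_Sset ha hab hc h1 h2 hm (by omega) hS (by rwa [sub_add_cancel])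
        fun h => by omega
end

section
/- Let (a,b,c) be a triple of positive real numbers with a < b < c, ⌊c/b⌋ ≥ 2, b − a < c₀ < a, and 0 ≤ c₁ ≤ 2a − b, where c₀ := c − ⌊c/b⌋·b and c₁ := ⌊c/b⌋·b − ⌊(⌊c/b⌋·b)/a⌋·a. If S_{a,b,c} ≠ ∅ and either a/b ∉ ℚ, or a/b = p/q for coprime positive integers p, q and c ∈ (b/q)ℤ, then ((S_{a,b,c} ∩ ([0, c₀+a−b) + aℤ)) + ⌊c/b⌋b) ∪ ⋃_{k=0}^{⌊c/b⌋−1} (S_{a,b,c} + kb) = ℝ, where X + r := {x + r : x ∈ X}. -/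
open MeasureTheory Set

/-!
Fix `t ∈ S` with binary witness `x`. Row `j` of `M(t)x = 1` says that the window `[ja, ja + c)`
contains a point of `t + b · supp x`. Given `m`, let `κ ≤ m` be the last support point: the window
just to the right of `t + κb` must contain a support point beyond `m`, which forces
`m - κ ≤ ⌊c/b⌋`, and in the extreme case `m - κ = ⌊c/b⌋` also `t + κb ∈ [0, c₀ + a - b) + aℤ`.
As `t + κb ∈ S`, this puts `t + mb` in the union; since `S + aℤ = S`, the whole orbit
`t + aℤ + bℤ` lies in it.

If `a/b` is irrational the orbit is dense, and the union is closed under limits from the right: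
for `S` this is compactness of the binary witnesses (an ultrafilter limit), using that each row of
`M(s)` only involves finitely many indicators, all constant just right of `s`.
If `a, b, c ∈ δℤ` with `δ = b/q`, every set involved is a union of cells `[nδ, (n+1)δ)`, and the
orbit meets every cell because `gcd(p, q) = 1`.
-/

open Filter Topology

lemma chiIco_of_mem {c v : ℝ} (h : v ∈ Ico 0 c) : chiIco c v = 1 := if_pos h

lemma chiIco_of_notMem {c v : ℝ} (h : v ∉ Ico 0 c) : chiIco c v = 0 := if_neg h

lemma mem_Ico_of_chiIco_ne_zero {c v : ℝ} (h : chiIco c v ≠ 0) : v ∈ Ico 0 c :=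
  not_not.mp (mt chiIco_of_notMem h)

lemma chiIco_congr {c c' v v' : ℝ} (h : v ∈ Ico 0 c ↔ v' ∈ Ico 0 c') :
    chiIco c v = chiIco c' v' := by
  by_cases hv : v ∈ Ico 0 c
  · rw [chiIco_of_mem hv, chiIco_of_mem (h.mp hv)]
  · rw [chiIco_of_notMem hv, chiIco_of_notMem (mt h.mpr hv)]

lemma eventually_chiIco_eq_nhdsGE (c v : ℝ) : ∀ᶠ u in 𝓝[≥] v, chiIco c u = chiIco c v := by
  by_cases hv : v ∈ Ico 0 c
  · filter_upwards [Ico_mem_nhdsGE hv.2] with u hu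
    rw [chiIco_of_mem hv, chiIco_of_mem ⟨hv.1.trans hu.1, hu.2⟩]
  rw [chiIco_of_notMem hv]
  rcases not_and_or.mp hv with hv | hv
  · filter_upwards [Ico_mem_nhdsGE (not_le.mp hv)] with u hu
    exact chiIco_of_notMem fun h => not_le.mpr hu.2 h.1
  · filter_upwards [self_mem_nhdsWithin] with u (hu : v ≤ u)
    exact chiIco_of_notMem fun h => hv (hu.trans_lt h.2)

lemma finite_setOf_chiIco_add_mul_ne_zero (c : ℝ) {b : ℝ} (hb : 0 < b) (lo hi : ℝ) :
    {k : ℤ | ∃ y ∈ Icc lo hi, chiIco c (y + k * b) ≠ 0}.Finite := by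
  refine (finite_Icc ⌈-hi / b⌉ ⌊(c - lo) / b⌋).subset ?_
  rintro k ⟨y, hy, hk⟩
  have hyk := mem_Ico_of_chiIco_ne_zero hk
  constructor
  · rw [Int.ceil_le, div_le_iff₀ hb]
    linarith [hy.2, hyk.1]
  · rw [Int.le_floor, le_div_iff₀ hb]
    linarith [hy.1, hyk.2]

lemma tendsto_add_const_nhdsGE (s r : ℝ) : Tendsto (· + r) (𝓝[≥] s) (𝓝[≥] (s + r)) :=
  (continuous_add_const r).continuousWithinAt.tendsto_nhdsWithin fun _ hy => by simpa using hy

/-- Only finitely many `k` matter near `s`, and each indicator is constant just right of `s`. -/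
lemma eventually_forall_chiIco_eq_nhdsGE (c : ℝ) {b : ℝ} (hb : 0 < b) (s e : ℝ) :
    ∀ᶠ y in 𝓝[≥] s, ∀ k : ℤ, chiIco c (y - e + k * b) = chiIco c (s - e + k * b) := by
  have hK := finite_setOf_chiIco_add_mul_ne_zero c hb (s - e) (s - e + 1)
  filter_upwards [Icc_mem_nhdsGE (lt_add_one s), hK.eventually_all.mpr fun k _ =>
    (tendsto_add_const_nhdsGE s (k * b - e)).eventually (eventually_chiIco_eq_nhdsGE c _)]
    with y hy hnear k
  by_cases hk : ∃ y ∈ Icc (s - e) (s - e + 1), chiIco c (y + k * b) ≠ 0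
  · convert hnear k hk using 2 <;> ring
  · push Not at hk
    rw [hk _ ⟨by linarith [hy.1], by linarith [hy.2]⟩,
      hk _ ⟨le_rfl, by linarith⟩]

/-- Closedness in the lower limit (Sorgenfrey) topology on `ℝ`. -/
def IsRightClosed (X : Set ℝ) : Prop :=
  ∀ s, (∃ᶠ y in 𝓝[≥] s, y ∈ X) → s ∈ X

namespace IsRightClosed

variable {X Y : Set ℝ}

lemma inter (hX : IsRightClosed X) (hY : IsRightClosed Y) : IsRightClosed (X ∩ Y) :=
  fun s hs => ⟨hX s (hs.mono fun _ h => h.1), hY s (hs.mono fun _ h => h.2)⟩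

lemma union (hX : IsRightClosed X) (hY : IsRightClosed Y) : IsRightClosed (X ∪ Y) :=
  fun s hs => (frequently_or_distrib.mp hs).imp (hX s) (hY s)

lemma biUnion {ι : Type*} {I : Set ι} (hI : I.Finite) {X : ι → Set ℝ}
    (hX : ∀ i ∈ I, IsRightClosed (X i)) : IsRightClosed (⋃ i ∈ I, X i) := by
  intro s hs
  by_contra hsX
  simp only [mem_iUnion, not_exists] at hsX
  have hfar : ∀ᶠ y in 𝓝[≥] s, ∀ i ∈ I, y ∉ X i :=
    hI.eventually_all.mpr fun i hi => not_frequently.mp (mt (hX i hi s) (hsX i hi))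
  obtain ⟨y, hy, hfar⟩ := (hs.and_eventually hfar).exists
  obtain ⟨i, hi, hyi⟩ := mem_iUnion₂.mp hy
  exact hfar i hi hyi

lemma image_add_const (hX : IsRightClosed X) (r : ℝ) : IsRightClosed ((· + r) '' X) := by
  intro s hs
  have hs' : ∃ᶠ y in 𝓝[≥] s, y + -r ∈ X := hs.mono fun y ⟨x, hx, hxy⟩ => by
    rwa [← hxy, add_neg_cancel_right]
  exact ⟨s + -r, hX _ ((tendsto_add_const_nhdsGE s (-r)).frequently hs'), by simp⟩

lemma eq_univ_of_dense (hX : IsRightClosed X) (hd : Dense X) : X = univ := by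
  refine eq_univ_of_forall fun s => hX s (frequently_iff.mpr fun hU => ?_)
  obtain ⟨u, hsu, hu⟩ := mem_nhdsGE_iff_exists_Ico_subset.mp hU
  obtain ⟨y, hyX, hy⟩ := hd.exists_between hsu
  exact ⟨y, hu (Ioo_subset_Ico_self hy), hyX⟩

end IsRightClosed

/-- Union of cells `[nδ, (n+1)δ)`, `n ∈ ℤ`. -/
def IsCellUnion (δ : ℝ) (X : Set ℝ) : Prop :=
  ∀ ⦃t t'⦄, ⌊t / δ⌋ = ⌊t' / δ⌋ → t ∈ X → t' ∈ X

namespace IsCellUnion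

variable {δ : ℝ} {X Y : Set ℝ}

lemma inter (hX : IsCellUnion δ X) (hY : IsCellUnion δ Y) : IsCellUnion δ (X ∩ Y) :=
  fun _ _ h ht => ⟨hX h ht.1, hY h ht.2⟩

lemma union (hX : IsCellUnion δ X) (hY : IsCellUnion δ Y) : IsCellUnion δ (X ∪ Y) :=
  fun _ _ h ht => ht.imp (hX h) (hY h)

lemma iUnion {ι : Sort*} {X : ι → Set ℝ} (hX : ∀ i, IsCellUnion δ (X i)) :
    IsCellUnion δ (⋃ i, X i) := fun _ _ h ht =>
  let ⟨i, hi⟩ := mem_iUnion.mp ht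
  mem_iUnion.mpr ⟨i, hX i h hi⟩

lemma image_add_const (hX : IsCellUnion δ X) (hδ : δ ≠ 0) {r : ℝ} (n : ℤ) (hr : r = n * δ) :
    IsCellUnion δ ((· + r) '' X) := by
  have hfloor : ∀ t, ⌊(t - r) / δ⌋ = ⌊t / δ⌋ - n := fun t => by
    rw [hr, sub_div, mul_div_cancel_right₀ _ hδ, Int.floor_sub_intCast]
  rintro t t' h ⟨x, hx, rfl⟩
  refine ⟨t' - r, hX ?_ hx, sub_add_cancel t' r⟩
  have hx' := hfloor (x + r)
  rw [add_sub_cancel_right] at hx'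
  rwa [hfloor, ← h]

lemma eq_univ (hX : IsCellUnion δ X) (hδ : δ ≠ 0) (t₀ : ℝ)
    (hgrid : ∀ n : ℤ, t₀ + n * δ ∈ X) : X = univ := by
  refine eq_univ_of_forall fun t => hX ?_ (hgrid (⌊t / δ⌋ - ⌊t₀ / δ⌋))
  rw [add_div, mul_div_cancel_right₀ _ hδ, Int.floor_add_intCast, add_sub_cancel]

end IsCellUnion

lemma add_int_mul_mem_Ico_iff {δ : ℝ} (hδ : 0 < δ) (t : ℝ) (s N : ℤ) :
    t + s * δ ∈ Ico 0 (N * δ) ↔ ⌊t / δ⌋ + s ∈ Ico 0 N := by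
  have hfloor : ⌊(t + s * δ) / δ⌋ = ⌊t / δ⌋ + s := by
    rw [add_div, mul_div_cancel_right₀ _ hδ.ne', Int.floor_add_intCast]
  rw [← hfloor, mem_Ico, mem_Ico, Int.floor_nonneg, Int.floor_lt, le_div_iff₀ hδ,
    div_lt_iff₀ hδ, zero_mul]

lemma exists_of_Mrow_eq_one {a b c t : ℝ} {x : ℤ → ℝ} {j : ℤ} (h : Mrow a b c t x j = 1) :
    ∃ k : ℤ, x k ≠ 0 ∧ t - j * a + k * b ∈ Ico 0 c := by
  by_contra hno
  simp only [not_exists, not_and] at hno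
  have hzero : Mrow a b c t x j = 0 := by
    refine (tsum_congr fun k => ?_).trans tsum_zero
    by_cases hk : x k = 0
    · rw [hk, mul_zero]
    · rw [chiIco_of_notMem (hno k hk), zero_mul]
  exact zero_ne_one (hzero.symm.trans h)

lemma add_int_mul_mem_Sset {a b c t : ℝ} (ht : t ∈ Sset a b c) (l : ℤ) :
    t + l * a ∈ Sset a b c := by
  obtain ⟨x, hx, hx0, hrow⟩ := ht
  refine ⟨x, hx, hx0, fun j => ?_⟩
  rw [← hrow (j - l)]
  refine tsum_congr fun k => ?_
  congr 2
  push_cast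
  ring

lemma add_int_mul_mem_Sset_of_support {a b c t : ℝ} {x : ℤ → ℝ}
    (hx : ∀ k, x k = 0 ∨ x k = 1) (hrow : ∀ j : ℤ, Mrow a b c t x j = 1) {κ : ℤ}
    (hκ : x κ = 1) : t + κ * b ∈ Sset a b c := by
  refine ⟨fun k => x (k + κ), fun k => hx _, by simpa using hκ, fun j => ?_⟩
  rw [← hrow j, Mrow, Mrow,
    ← (Equiv.addRight κ).tsum_eq fun k => chiIco c (t - j * a + k * b) * x k]
  refine tsum_congr fun k => ?_
  simp only [Equiv.coe_addRight]
  congr 2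
  push_cast
  ring

lemma isRightClosed_Sset (a : ℝ) {b : ℝ} (hb : 0 < b) (c : ℝ) : IsRightClosed (Sset a b c) := by
  classical
  intro s hs
  have : NeBot (𝓝[≥] s ⊓ 𝓟 (Sset a b c)) := frequently_iff_neBot.mp hs
  obtain ⟨U, hU⟩ := Ultrafilter.exists_le (𝓝[≥] s ⊓ 𝓟 (Sset a b c))
  have hSU : ∀ᶠ y in (U : Filter ℝ), y ∈ Sset a b c :=
    hU.trans inf_le_right (mem_principal_self _)
  choose! w hw_bin hw0 hw using fun y (hy : y ∈ Sset a b c) => hy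
  -- the coordinates of the limit witness are the `U`-majority values
  let x : ℤ → ℝ := fun k => if {y | w y k = 1} ∈ U then 1 else 0
  have hwx : ∀ k, ∀ᶠ y in (U : Filter ℝ), w y k = x k := by
    intro k
    by_cases hk : {y | w y k = 1} ∈ U
    · simp only [x, if_pos hk]
      exact hk
    · filter_upwards [hSU, U.compl_mem_iff_notMem.mpr hk] with y hyS hy
      simpa [x, hk] using (hw_bin y hyS k).resolve_right hy
  refine ⟨x, fun k => ?_, ?_, fun j => ?_⟩
  · by_cases hk : {y | w y k = 1} ∈ U <;> simp [x, hk]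
  · obtain ⟨y, hyS, hy⟩ := (hSU.and (hwx 0)).exists
    rw [← hy, hw0 y hyS]
  · have hK := finite_setOf_chiIco_add_mul_ne_zero c hb (s - j * a) (s - j * a)
    obtain ⟨y, hyS, hχ, hyx⟩ := (hSU.and
      (((eventually_forall_chiIco_eq_nhdsGE c hb s (j * a)).filter_mono
        (hU.trans inf_le_left)).and (hK.eventually_all.mpr fun k _ => hwx k))).exists
    rw [← hw y hyS j]
    refine tsum_congr fun k => ?_
    rw [hχ k]
    by_cases hk : chiIco c (s - j * a + k * b) = 0
    · rw [hk, zero_mul, zero_mul]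
    · rw [hyx k ⟨s - j * a, left_mem_Icc.mpr le_rfl, hk⟩]

lemma isCellUnion_Sset {a b c δ : ℝ} (hδ : 0 < δ) {p q N : ℤ} (ha : a = p * δ)
    (hb : b = q * δ) (hc : c = N * δ) : IsCellUnion δ (Sset a b c) := by
  rintro t t' h ⟨x, hx, hx0, hrow⟩
  refine ⟨x, hx, hx0, fun j => ?_⟩
  rw [← hrow j]
  refine tsum_congr fun k => ?_
  have hgrid : ∀ u : ℝ, u - j * a + k * b = u + ((k * q - j * p : ℤ) : ℝ) * δ := fun u => by
    rw [ha, hb]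
    push_cast
    ring
  rw [hgrid, hgrid, hc]
  congr 1
  exact chiIco_congr (by rw [add_int_mul_mem_Ico_iff hδ, add_int_mul_mem_Ico_iff hδ, h])

lemma isRightClosed_perSet_Ico {a : ℝ} (ha : 0 < a) (w : ℝ) :
    IsRightClosed (perSet a (Ico 0 w)) := by
  intro s hs
  have hl : ⌊s / a⌋ * a ≤ s := (le_div_iff₀ ha).mp (Int.floor_le _)
  have hl' : s < (⌊s / a⌋ + 1) * a := (div_lt_iff₀ ha).mp (Int.lt_floor_add_one _)
  obtain ⟨y, ⟨l, hl0, hlw⟩, hy⟩ := (hs.and_eventually (Ico_mem_nhdsGE hl')).exists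
  have hll : (l : ℝ) ≤ ⌊s / a⌋ := by
    have hlt : (l : ℝ) < ⌊s / a⌋ + 1 := lt_of_mul_lt_mul_right (by linarith [hy.2]) ha.le
    exact_mod_cast Int.lt_add_one_iff.mp (by exact_mod_cast hlt)
  have hla : (l : ℝ) * a ≤ ⌊s / a⌋ * a := mul_le_mul_of_nonneg_right hll ha.le
  exact ⟨⌊s / a⌋, by linarith, by linarith [hy.1]⟩

lemma isCellUnion_perSet_Ico {a w δ : ℝ} (hδ : 0 < δ) {p W : ℤ} (ha : a = p * δ)
    (hw : w = W * δ) : IsCellUnion δ (perSet a (Ico 0 w)) := by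
  rintro t t' h ⟨l, hl⟩
  refine ⟨l, ?_⟩
  have hgrid : ∀ u : ℝ, u - l * a = u + ((-(l * p) : ℤ) : ℝ) * δ := fun u => by
    rw [ha]
    push_cast
    ring
  rw [hgrid, hw, add_int_mul_mem_Ico_iff hδ, ← h, ← add_int_mul_mem_Ico_iff hδ, ← hw, ← hgrid]
  exact hl

/-- The window of row `⌊(t + mb - c)/a⌋` shows that `κ` exists; that of row `l + 1` holds a
support point after `κ`, hence beyond `m`. -/
lemma exists_support_le_gap_lt {a b c t : ℝ} (ha : 0 < a) (hb : 0 < b) {x : ℤ → ℝ}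
    (hx : ∀ k, x k = 0 ∨ x k = 1) (hrow : ∀ j : ℤ, Mrow a b c t x j = 1) (m : ℤ) :
    ∃ κ ≤ m, x κ = 1 ∧ ∃ l : ℤ,
      0 ≤ t + κ * b - l * a ∧ t + κ * b - l * a + (m + 1 - κ) * b < a + c := by
  have hsupport : ∀ j : ℤ, ∃ k, x k = 1 ∧ j * a ≤ t + k * b ∧ t + k * b < j * a + c := by
    intro j
    obtain ⟨k, hk, hk0, hkc⟩ := exists_of_Mrow_eq_one (hrow j)
    exact ⟨k, (hx k).resolve_left hk, by linarith, by linarith⟩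
  have hlow : ∃ k, x k = 1 ∧ k ≤ m := by
    obtain ⟨k, hk, -, hkc⟩ := hsupport ⌊(t + m * b - c) / a⌋
    have hj := (le_div_iff₀ ha).mp (Int.floor_le ((t + m * b - c) / a))
    have hkm : (k : ℝ) < m := lt_of_mul_lt_mul_right (by linarith) hb.le
    exact ⟨k, hk, by exact_mod_cast hkm.le⟩
  obtain ⟨κ, ⟨hκ, hκm⟩, hmax⟩ :=
    Int.exists_greatest_of_bdd (P := fun k => x k = 1 ∧ k ≤ m) ⟨m, fun _ h => h.2⟩ hlow
  set l := ⌊(t + κ * b) / a⌋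
  have hl : l * a ≤ t + κ * b := (le_div_iff₀ ha).mp (Int.floor_le _)
  have hl' : t + κ * b < (l + 1) * a := (div_lt_iff₀ ha).mp (Int.lt_floor_add_one _)
  obtain ⟨k, hk, hjk, hkc⟩ := hsupport (l + 1)
  push_cast at hjk hkc
  have hmk : m + 1 ≤ k := by
    by_contra! hkm
    have hκk : (κ : ℝ) < k := lt_of_mul_lt_mul_right (by linarith) hb.le
    exact absurd (hmax k ⟨hk, by omega⟩) (not_le.mpr (by exact_mod_cast hκk))
  have hmkb : ((m : ℝ) + 1) * b ≤ k * b :=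
    mul_le_mul_of_nonneg_right (by exact_mod_cast hmk) hb.le
  exact ⟨κ, hκm, hκ, l, by linarith, by linarith⟩

def coverSet (a b c : ℝ) : Set ℝ :=
  ((fun t => t + (⌊c / b⌋ : ℝ) * b) ''
      (Sset a b c ∩ perSet a (Ico 0 (c - (⌊c / b⌋ : ℝ) * b + a - b)))) ∪
    ⋃ (k : ℕ) (_ : (k : ℤ) ≤ ⌊c / b⌋ - 1), (fun t => t + (k : ℝ) * b) '' Sset a b c

lemma add_int_mul_mem_coverSet {a b c t : ℝ} (ha : 0 < a) (hab : a < b)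
    (ht : t ∈ Sset a b c) (m : ℤ) : t + m * b ∈ coverSet a b c := by
  have hb := ha.trans hab
  obtain ⟨x, hx, -, hrow⟩ := ht
  obtain ⟨κ, hκm, hκ, l, hl0, hgap⟩ := exists_support_le_gap_lt ha hb hx hrow m
  have hSκ := add_int_mul_mem_Sset_of_support hx hrow hκ
  obtain ⟨n, hn⟩ : ∃ n : ℕ, (n : ℤ) = m - κ := ⟨(m - κ).toNat, Int.toNat_of_nonneg (by omega)⟩
  have hnR : (n : ℝ) = m - κ := by exact_mod_cast hn
  have hgap' : t + κ * b - l * a + n * b + b < a + c := by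
    rw [hnR]
    linarith
  have hnL : (n : ℤ) ≤ ⌊c / b⌋ := by
    rw [Int.le_floor, le_div_iff₀ hb]
    push_cast
    linarith
  rcases hnL.lt_or_eq with hlt | heq
  · refine Or.inr (mem_iUnion₂.mpr ⟨n, by omega, t + κ * b, hSκ, ?_⟩)
    simp only [hnR]
    ring
  · have hLR : (⌊c / b⌋ : ℝ) = n := by exact_mod_cast heq.symm
    refine Or.inl ⟨t + κ * b, ⟨hSκ, l, hl0, ?_⟩, ?_⟩
    · rw [hLR]
      linarith
    · simp only [hLR, hnR]
      ring

lemma isRightClosed_coverSet {a b : ℝ} (ha : 0 < a) (hb : 0 < b) (c : ℝ) :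
    IsRightClosed (coverSet a b c) := by
  have hS := isRightClosed_Sset a hb c
  refine ((hS.inter (isRightClosed_perSet_Ico ha _)).image_add_const _).union
    (IsRightClosed.biUnion (I := {k : ℕ | (k : ℤ) ≤ ⌊c / b⌋ - 1}) ?_
      fun k _ => hS.image_add_const _)
  exact (finite_Iic (⌊c / b⌋ - 1).toNat).subset fun k (hk : (k : ℤ) ≤ _) =>
    show k ≤ _ by omega

lemma isCellUnion_coverSet {a b c δ : ℝ} (hδ : 0 < δ) {p q N : ℤ} (ha : a = p * δ)
    (hb : b = q * δ) (hc : c = N * δ) : IsCellUnion δ (coverSet a b c) := by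
  have hS := isCellUnion_Sset hδ ha hb hc
  have hP := isCellUnion_perSet_Ico hδ ha (w := c - ⌊c / b⌋ * b + a - b)
    (W := N - ⌊c / b⌋ * q + p - q) (by rw [ha, hc, hb]; push_cast; ring)
  refine ((hS.inter hP).image_add_const hδ.ne' (⌊c / b⌋ * q) ?_).union
    (IsCellUnion.iUnion fun k => IsCellUnion.iUnion fun _ =>
      hS.image_add_const hδ.ne' (k * q) ?_) <;>
  · rw [hb]
    push_cast
    ring

lemma coverSet_eq_univ_of_irrational {a b c t₀ : ℝ} (ha : 0 < a) (hb : 0 < b)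
    (hirr : Irrational (a / b)) (horbit : ∀ l m : ℤ, t₀ + l * a + m * b ∈ coverSet a b c) :
    coverSet a b c = univ := by
  refine (isRightClosed_coverSet ha hb c).eq_univ_of_dense (Dense.mono ?_
    ((Homeomorph.addLeft t₀).isDenseEmbedding.dense_image.mpr
      (dense_addSubgroupClosure_pair_iff.mpr hirr)))
  rintro _ ⟨g, hg, rfl⟩
  obtain ⟨l, m, rfl⟩ := AddSubgroup.mem_closure_pair.mp hg
  simpa [zsmul_eq_mul, add_assoc] using horbit l m

lemma coverSet_eq_univ_of_div_eq {a b c t₀ : ℝ} (hb : 0 < b) {p q : ℕ} (hq : 0 < q)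
    (hpq : p.Coprime q) (hab : a / b = p / q) {N : ℤ} (hc : c = N * (b / q))
    (horbit : ∀ l m : ℤ, t₀ + l * a + m * b ∈ coverSet a b c) : coverSet a b c = univ := by
  have hq' : (0 : ℝ) < q := by exact_mod_cast hq
  set δ := b / q
  have hδ : 0 < δ := div_pos hb hq'
  have hbδ : b = (q : ℤ) * δ := by
    simp only [δ, Int.cast_natCast]
    field_simp
  have haδ : a = (p : ℤ) * δ := by
    rw [div_eq_div_iff hb.ne' hq'.ne'] at hab
    simp only [δ, Int.cast_natCast]
    field_simp
    linarith
  obtain ⟨u, v, huv⟩ := Nat.isCoprime_iff_coprime.mpr hpq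
  have huv' : (u : ℝ) * p + v * q = 1 := by exact_mod_cast huv
  refine (isCellUnion_coverSet hδ haδ hbδ hc).eq_univ hδ.ne' t₀ fun n => ?_
  convert horbit (n * u) (n * v) using 1
  rw [haδ, hbδ]
  push_cast
  linear_combination (-(n : ℝ) * δ) * huv'

theorem S_covering_general (a b c c₀ : ℝ)
    (ha : 0 < a) (hab : a < b)
    (hc0 : c₀ = c - (⌊c / b⌋ : ℝ) * b)
    (hS : Sset a b c ≠ ∅)
    (hcase : Irrational (a / b) ∨
      ∃ p q : ℕ, 0 < p ∧ 0 < q ∧ Nat.Coprime p q ∧ a / b = (p : ℝ) / (q : ℝ) ∧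
        ∃ k : ℤ, c = (k : ℝ) * (b / (q : ℝ))) :
    ((fun t => t + (⌊c / b⌋ : ℝ) * b) ''
        (Sset a b c ∩ perSet a (Set.Ico 0 (c₀ + a - b)))) ∪
      (⋃ (k : ℕ) (_ : (k : ℤ) ≤ ⌊c / b⌋ - 1),
        (fun t => t + (k : ℝ) * b) '' Sset a b c) = Set.univ := by
  subst hc0
  change coverSet a b c = univ
  have hb : 0 < b := ha.trans hab
  obtain ⟨t₀, ht₀⟩ := nonempty_iff_ne_empty.mpr hS
  have horbit (l m : ℤ) : t₀ + l * a + m * b ∈ coverSet a b c :=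
    add_int_mul_mem_coverSet ha hab (add_int_mul_mem_Sset ht₀ l) m
  rcases hcase with hirr | ⟨p, q, -, hq, hpq, hpq_eq, N, hc⟩
  · exact coverSet_eq_univ_of_irrational ha hb hirr horbit
  · exact coverSet_eq_univ_of_div_eq hb hq hpq hpq_eq hc horbit

/-- Theorem `covering2`: with `c₀ = c − ⌊c/b⌋·b`, `c₁ = ⌊c/b⌋·b − ⌊(⌊c/b⌋·b)/a⌋·a`,
`⌊c/b⌋ ≥ 2`, `b − a < c₀ < a`, `0 ≤ c₁ ≤ 2a − b`, if `S_{a,b,c} ≠ ∅` and either `a/b ∉ ℚ` or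
`a/b = p/q` (coprime) with `c ∈ (b/q)ℤ`, then
`((S_{a,b,c} ∩ ([0, c₀+a−b) + aℤ)) + ⌊c/b⌋b) ∪ ⋃_{k=0}^{⌊c/b⌋−1} (S_{a,b,c} + kb) = ℝ`. -/
theorem S_covering (a b c c₀ c₁ : ℝ)
    (ha : 0 < a) (hab : a < b) (hbc : b < c)
    (hc0 : c₀ = c - (⌊c / b⌋ : ℝ) * b)
    (hc1 : c₁ = (⌊c / b⌋ : ℝ) * b - (⌊((⌊c / b⌋ : ℝ) * b) / a⌋ : ℝ) * a)
    (hL : 2 ≤ ⌊c / b⌋) (h1 : b - a < c₀) (h2 : c₀ < a)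
    (h3 : 0 ≤ c₁) (h4 : c₁ ≤ 2 * a - b)
    (hS : Sset a b c ≠ ∅)
    (hcase : Irrational (a / b) ∨
      ∃ p q : ℕ, 0 < p ∧ 0 < q ∧ Nat.Coprime p q ∧ a / b = (p : ℝ) / (q : ℝ) ∧
        ∃ k : ℤ, c = (k : ℝ) * (b / (q : ℝ))) :
    ((fun t => t + (⌊c / b⌋ : ℝ) * b) ''
        (Sset a b c ∩ perSet a (Set.Ico 0 (c₀ + a - b)))) ∪
      (⋃ (k : ℕ) (_ : (k : ℤ) ≤ ⌊c / b⌋ - 1),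
        (fun t => t + (k : ℝ) * b) '' Sset a b c) = Set.univ :=
  S_covering_general a b c c₀ ha hab hc0 hS hcase
end
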